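/- arXiv:2306.09125 — 3 statements merged into one kernel-verified Lean document; each statement's English description precedes it below -/
import Mathlib

section
/- Let e₀ : ℝ² → ℝ³ × ℂ be the map e₀(x, y) = ((sin(πx)·cos(2πy), cos(πx)·cos(2πy), sin(2πy)), exp(2πix)). Then for all x, y ∈ ℝ the point e₀(x, y) lies in S² × S¹ (i.e. the first component has Euclidean norm 1 in ℝ³ and the second component has absolute value 1 in ℂ), and e₀ satisfies the identities e₀(x, y + 1) = e₀(x, y) and e₀(x + 1, y) = e₀(x, 1/2 − y) for all x, y ∈ ℝ. -/
/- Shifting `x` by `1` turns the angle `πx` by `π`, which negates the first two coordinates of the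
sphere point and fixes `exp(2πix)`; the reflection `y ↦ 1/2 - y` sends `2πy` to `π - 2πy`, which
negates `cos(2πy)` and fixes `sin(2πy)`, so it negates the same two coordinates. -/

open Real

/-- The explicit parametrization of the Klein bottle inside `S² × S¹` from the paper:
`e₀(x, y) = ((sin(πx)·cos(2πy), cos(πx)·cos(2πy), sin(2πy)), exp(2πix))`. -/
noncomputable def e₀ : ℝ × ℝ → EuclideanSpace ℝ (Fin 3) × ℂ := fun p =>
  ((WithLp.equiv 2 (Fin 3 → ℝ)).symm
      ![Real.sin (π * p.1) * Real.cos (2 * π * p.2),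
        Real.cos (π * p.1) * Real.cos (2 * π * p.2),
        Real.sin (2 * π * p.2)],
    Complex.exp (2 * π * p.1 * Complex.I))

theorem norm_sin_mul_cos_cos_mul_cos_sin (a b : ℝ) :
    ‖(WithLp.equiv 2 (Fin 3 → ℝ)).symm ![sin a * cos b, cos a * cos b, sin b]‖ = 1 := by
  rw [EuclideanSpace.norm_eq, sqrt_eq_one]
  simp only [WithLp.equiv_symm_apply, PiLp.toLp_apply, Fin.sum_univ_three, norm_eq_abs, sq_abs,
    Matrix.cons_val_zero, Matrix.cons_val_one, Matrix.cons_val_two, Matrix.head_cons,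
    Matrix.tail_cons]
  linear_combination cos b ^ 2 * sin_sq_add_cos_sq a + sin_sq_add_cos_sq b

theorem norm_e₀_fst (x y : ℝ) : ‖(e₀ (x, y)).1‖ = 1 :=
  norm_sin_mul_cos_cos_mul_cos_sin _ _

theorem norm_e₀_snd (x y : ℝ) : ‖(e₀ (x, y)).2‖ = 1 := by
  simpa only [e₀, Complex.ofReal_mul, Complex.ofReal_ofNat] using
    Complex.norm_exp_ofReal_mul_I (2 * π * x)

theorem e₀_add_one_right (x y : ℝ) : e₀ (x, y + 1) = e₀ (x, y) := by
  have hturn : 2 * π * (y + 1) = 2 * π * y + 2 * π := by ring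
  simp only [e₀, hturn, cos_add_two_pi, sin_add_two_pi]

theorem e₀_add_one_left (x y : ℝ) : e₀ (x + 1, y) = e₀ (x, 1 / 2 - y) := by
  have hhalf : π * (x + 1) = π * x + π := by ring
  have hrefl : 2 * π * (1 / 2 - y) = π - 2 * π * y := by ring
  have hexp :
      Complex.exp (2 * π * ↑(x + 1) * Complex.I) = Complex.exp (2 * π * x * Complex.I) := by
    rw [← Complex.exp_periodic.int_mul 1 (2 * π * x * Complex.I)]
    push_cast
    ring_nf
  simp only [e₀, hhalf, hrefl, hexp, sin_add_pi, cos_add_pi, cos_pi_sub, sin_pi_sub, neg_mul,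
    mul_neg]

theorem e0_maps_to_sphere_times_circle_and_periodicity :
    (∀ x y : ℝ, ‖(e₀ (x, y)).1‖ = 1 ∧ ‖(e₀ (x, y)).2‖ = 1) ∧
    (∀ x y : ℝ, e₀ (x, y + 1) = e₀ (x, y)) ∧
    (∀ x y : ℝ, e₀ (x + 1, y) = e₀ (x, 1 / 2 - y)) :=
  ⟨fun x y => ⟨norm_e₀_fst x y, norm_e₀_snd x y⟩, e₀_add_one_right, e₀_add_one_left⟩
end

section
/- Let e₀ : ℝ² → ℝ³ × ℂ be the map e₀(x, y) = ((sin(πx)·cos(2πy), cos(πx)·cos(2πy), sin(2πy)), exp(2πix)). Then for all (x, y), (x′, y′) ∈ ℝ² one has e₀(x, y) = e₀(x′, y′) if and only if there exist integers m, n such that x′ = x + m and y′ = (−1)^m · y + m/2 + n. In other words, the fibers of e₀ are exactly the orbits of the group of homeomorphisms of ℝ² generated by (x, y) ↦ (x, y + 1) and (x, y) ↦ (x + 1, 1/2 − y) (the deck group of the Klein bottle). -/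
open Real

/-!
The `S¹`-factor `exp(2πix)` determines `x` modulo `1`, say `x' = x + m`. This shift multiplies
the unit vector `(sin πx, cos πx)` by `(-1)^m`, so the first two coordinates of the `S²`-factor
agree exactly when `cos 2πy' = (-1)^m cos 2πy`, and the third one says `sin 2πy' = sin 2πy`.
Since `(-1)^m · θ + mπ` is the angle with cosine `(-1)^m cos θ` and sine `sin θ`, these two
equations pin down `2πy'` modulo `2π` as `(-1)^m · 2πy + mπ`, i.e. `y' ≡ (-1)^m y + m/2 mod 1`.
-/

lemma Circle.exp_two_pi_mul_eq_exp_two_pi_mul_iff {a b : ℝ} :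
    Circle.exp (2 * π * a) = Circle.exp (2 * π * b) ↔ ∃ n : ℤ, a = b + n := by
  rw [Circle.exp_eq_exp]
  refine exists_congr fun n => ?_
  rw [show 2 * π * b + n * (2 * π) = 2 * π * (b + n) by ring,
    mul_right_inj' (mul_ne_zero two_ne_zero pi_ne_zero)]

lemma cos_two_pi_mul_eq_and_sin_two_pi_mul_eq_iff {a b : ℝ} :
    cos (2 * π * a) = cos (2 * π * b) ∧ sin (2 * π * a) = sin (2 * π * b) ↔
      ∃ n : ℤ, a = b + n := by
  rw [← Circle.exp_two_pi_mul_eq_exp_two_pi_mul_iff, Circle.ext_iff, Circle.coe_exp,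
    Circle.coe_exp, Complex.ext_iff, Complex.exp_ofReal_mul_I_re, Complex.exp_ofReal_mul_I_re,
    Complex.exp_ofReal_mul_I_im, Complex.exp_ofReal_mul_I_im]

lemma Complex.exp_two_pi_mul_I_eq_iff {a b : ℝ} :
    Complex.exp (2 * π * a * I) = Complex.exp (2 * π * b * I) ↔ ∃ n : ℤ, a = b + n := by
  rw [← Circle.exp_two_pi_mul_eq_exp_two_pi_mul_iff, Circle.ext_iff, Circle.coe_exp,
    Circle.coe_exp]
  push_cast
  rfl

lemma cos_neg_one_zpow_mul_add_int_mul_pi (θ : ℝ) (m : ℤ) :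
    cos ((-1) ^ m * θ + m * π) = (-1) ^ m * cos θ := by
  rw [cos_add_int_mul_pi]
  rcases Int.even_or_odd m with hm | hm <;> simp [hm.neg_one_zpow]

lemma sin_neg_one_zpow_mul_add_int_mul_pi (θ : ℝ) (m : ℤ) :
    sin ((-1) ^ m * θ + m * π) = sin θ := by
  rw [sin_add_int_mul_pi]
  rcases Int.even_or_odd m with hm | hm <;> simp [hm.neg_one_zpow]

lemma eq_neg_one_zpow_mul_comm {α : Type*} [DivisionRing α] {a b : α} (m : ℤ) :
    a = (-1) ^ m * b ↔ b = (-1) ^ m * a := by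
  have hsq : (-1 : α) ^ m * (-1) ^ m = 1 := by rw [← (Commute.refl (-1 : α)).mul_zpow]; norm_num
  constructor <;> rintro rfl <;> rw [← mul_assoc, hsq, one_mul]

lemma mul_eq_mul_and_mul_eq_mul_iff {R : Type*} [CommRing R] {s c a b : R}
    (h : s ^ 2 + c ^ 2 = 1) : s * a = s * b ∧ c * a = c * b ↔ a = b :=
  ⟨fun ⟨hs, hc⟩ => by linear_combination s * hs + c * hc - (a - b) * h,
    fun hab => by rw [hab]; exact ⟨rfl, rfl⟩⟩

lemma e₀_eq_e₀_iff {x y x' y' : ℝ} :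
    e₀ (x, y) = e₀ (x', y') ↔
      ∃ m : ℤ, x' = x + m ∧
        cos (2 * π * y') = (-1) ^ m * cos (2 * π * y) ∧ sin (2 * π * y') = sin (2 * π * y) := by
  have hcoords : e₀ (x, y) = e₀ (x', y') ↔
      (sin (π * x) * cos (2 * π * y) = sin (π * x') * cos (2 * π * y') ∧
        cos (π * x) * cos (2 * π * y) = cos (π * x') * cos (2 * π * y') ∧
        sin (2 * π * y) = sin (2 * π * y')) ∧
      Complex.exp (2 * π * x * Complex.I) = Complex.exp (2 * π * x' * Complex.I) := by
    simp [e₀, Prod.ext_iff, funext_iff, Fin.forall_fin_succ]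
  rw [hcoords, and_comm, eq_comm (a := Complex.exp _), Complex.exp_two_pi_mul_I_eq_iff,
    ← exists_and_right]
  refine exists_congr fun m => and_congr_right fun hx' => ?_
  have hπx' : π * x' = π * x + m * π := by rw [hx']; ring
  have hsin : sin (π * x') * cos (2 * π * y') = sin (π * x) * ((-1) ^ m * cos (2 * π * y')) := by
    rw [hπx', sin_add_int_mul_pi]; ring
  have hcos : cos (π * x') * cos (2 * π * y') = cos (π * x) * ((-1) ^ m * cos (2 * π * y')) := by
    rw [hπx', cos_add_int_mul_pi]; ring
  rw [hsin, hcos, ← and_assoc, mul_eq_mul_and_mul_eq_mul_iff (sin_sq_add_cos_sq _),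
    eq_neg_one_zpow_mul_comm, eq_comm (a := sin _)]

lemma cos_eq_neg_one_zpow_mul_cos_and_sin_eq_sin_iff {y y' : ℝ} (m : ℤ) :
    cos (2 * π * y') = (-1) ^ m * cos (2 * π * y) ∧ sin (2 * π * y') = sin (2 * π * y) ↔
      ∃ n : ℤ, y' = (-1) ^ m * y + m / 2 + n := by
  have hangle : 2 * π * ((-1) ^ m * y + m / 2) = (-1) ^ m * (2 * π * y) + m * π := by ring
  rw [← cos_neg_one_zpow_mul_add_int_mul_pi, ← sin_neg_one_zpow_mul_add_int_mul_pi (2 * π * y) m,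
    ← hangle, cos_two_pi_mul_eq_and_sin_two_pi_mul_eq_iff]

/-- The fibers of `e₀` are exactly the orbits of the deck group of the Klein bottle,
generated by `(x, y) ↦ (x, y + 1)` and `(x, y) ↦ (x + 1, 1/2 − y)`. -/
theorem e0_fibers_are_klein_deck_orbits (x y x' y' : ℝ) :
    e₀ (x, y) = e₀ (x', y') ↔
      ∃ m n : ℤ, x' = x + m ∧ y' = (-1 : ℝ) ^ m * y + (m : ℝ) / 2 + n := by
  simp only [e₀_eq_e₀_iff, cos_eq_neg_one_zpow_mul_cos_and_sin_eq_sin_iff, exists_and_left]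
end

section
/- Let X be a topological space and φ : X → X a homeomorphism, and let ℤ act on X × ℝ by n · (x, s) = (φⁿ(x), s − n). Then the natural projection v_φ : X × ℝ → (X × ℝ)/ℤ onto the orbit-space quotient (with the quotient topology) is a covering map. -/
/-- The deck action of `ℤ` on `X × ℝ` associated with a homeomorphism `φ` of `X`:
`n · (x, s) = (φⁿ(x), s − n)`. -/
def suspAct {X : Type*} [TopologicalSpace X] (φ : X ≃ₜ X) (n : ℤ) (p : X × ℝ) : X × ℝ :=
  ((φ.toEquiv ^ n) p.1, p.2 - n)

/-- The orbit relation of the `ℤ`-action `n · (x, s) = (φⁿ(x), s − n)` on `X × ℝ`. -/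
def suspRel {X : Type*} [TopologicalSpace X] (φ : X ≃ₜ X) (p q : X × ℝ) : Prop :=
  ∃ n : ℤ, q = suspAct φ n p

/-- The suspension (mapping torus) `Π_φ = (X × ℝ)/ℤ` of a homeomorphism `φ`. -/
def SuspSpace {X : Type*} [TopologicalSpace X] (φ : X ≃ₜ X) : Type _ :=
  Quot (suspRel φ)

instance {X : Type*} [TopologicalSpace X] (φ : X ≃ₜ X) : TopologicalSpace (SuspSpace φ) :=
  instTopologicalSpaceQuot


/-! The height `s` drops by exactly `n` under the action of `n`, so each slab
`X × (s₀ - 1/2, s₀ + 1/2)` is disjoint from all its nontrivial translates. The action is by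
homeomorphisms and the fibres of the projection are its orbits, so the projection is a quotient
covering map in the sense of `IsAddQuotientCoveringMap`. -/

namespace Homeomorph

variable {X : Type*} [TopologicalSpace X]

def toPermHom : (X ≃ₜ X) →* Equiv.Perm X where
  toFun := Homeomorph.toEquiv
  map_one' := rfl
  map_mul' _ _ := rfl

theorem continuous_toEquiv_zpow (φ : X ≃ₜ X) (n : ℤ) : Continuous ⇑(φ.toEquiv ^ n) := by
  rw [show φ.toEquiv ^ n = (φ ^ n).toEquiv from (map_zpow toPermHom φ n).symm]
  exact (φ ^ n).continuous

end Homeomorph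

theorem Int.eq_zero_of_vadd_image_inter_preimage_ball_nonempty {E : Type*} [AddAction ℤ E]
    (h : E → ℝ) (hh : ∀ (n : ℤ) e, h (n +ᵥ e) = h e - n) {c : ℝ} {n : ℤ}
    (hn : ((n +ᵥ ·) '' (h ⁻¹' Metric.ball c 2⁻¹) ∩ h ⁻¹' Metric.ball c 2⁻¹).Nonempty) :
    n = 0 := by
  obtain ⟨_, ⟨e, he, rfl⟩, hne⟩ := hn
  simp only [Set.mem_preimage, Real.dist_eq, Metric.mem_ball, hh] at he hne
  have : |(n : ℝ)| < 1 := by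
    rw [abs_lt] at he hne ⊢
    constructor <;> linarith
  exact Int.abs_lt_one_iff.mp (by exact_mod_cast this)

namespace SuspSpace

variable {X : Type*} [TopologicalSpace X] (φ : X ≃ₜ X)

theorem suspAct_zero (p : X × ℝ) : suspAct φ 0 p = p := by
  simp [suspAct]

theorem suspAct_add (m n : ℤ) (p : X × ℝ) :
    suspAct φ (m + n) p = suspAct φ m (suspAct φ n p) := by
  ext
  · simp [suspAct, zpow_add]
  · simp only [suspAct, Int.cast_add]
    ring

abbrev addAction : AddAction ℤ (X × ℝ) where
  vadd := suspAct φ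
  zero_vadd := suspAct_zero φ
  add_vadd := suspAct_add φ

theorem suspRel_equivalence : Equivalence (suspRel φ) := by
  let := addAction φ
  refine ⟨fun p ↦ ⟨0, (zero_vadd ℤ p).symm⟩, ?_, ?_⟩
  · rintro p _ ⟨n, rfl⟩
    exact ⟨-n, (neg_vadd_vadd n p).symm⟩
  · rintro p _ _ ⟨n, rfl⟩ ⟨m, rfl⟩
    exact ⟨m + n, (add_vadd m n p).symm⟩

theorem isAddQuotientCoveringMap_quotMk :
    letI := addAction φ
    IsAddQuotientCoveringMap (Quot.mk (suspRel φ)) ℤ := by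
  let := addAction φ
  exact {
    toIsQuotientMap := isQuotientMap_quot_mk
    continuous_const_vadd n :=
      ((φ.continuous_toEquiv_zpow n).comp continuous_fst).prodMk
        (continuous_snd.sub continuous_const)
    apply_eq_iff_mem_orbit := by
      intro p q
      rw [eq_comm, Quot.eq, (suspRel_equivalence φ).eqvGen_iff, AddAction.mem_orbit_iff]
      exact exists_congr fun _ ↦ eq_comm
    disjoint e :=
      ⟨_, continuous_snd.continuousAt.preimage_mem_nhds (Metric.ball_mem_nhds e.2 (by norm_num)),
        fun _ ↦ Int.eq_zero_of_vadd_image_inter_preimage_ball_nonempty Prod.snd fun _ _ ↦ rfl⟩ }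

end SuspSpace

/-- The natural projection `v_φ : X × ℝ → (X × ℝ)/ℤ` onto the orbit space of the
action `n · (x, s) = (φⁿ(x), s − n)` is a covering map. -/
theorem suspension_projection_is_covering_map
    {X : Type*} [TopologicalSpace X] (φ : X ≃ₜ X) :
    IsCoveringMap (Quot.mk (suspRel φ) : X × ℝ → SuspSpace φ) :=
  letI := SuspSpace.addAction φ
  (SuspSpace.isAddQuotientCoveringMap_quotMk φ).isCoveringMap
end
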